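/- arXiv:1605.02585 — 2 statements merged into one kernel-verified Lean document; each statement's English description precedes it below -/
import Mathlib

section
/- Let (Ω, F, P) be a probability space with a filtration (F_n)_{n≥0}, and let (y_n)_{n≥0} be a sequence of random vectors in a finite-dimensional normed space, adapted to (F_n), with each ‖y_n − y*‖ integrable, where y* is a fixed point of the space. Let u > 0 and D ≥ 0 be constants, and suppose that for every n, almost surely E[‖y_{n+1} − y*‖ | F_n] ≤ ‖y_n − y*‖ − u on the event {‖y_n − y*‖ ≥ D}, and E[‖y_{n+1} − y*‖ | F_n] ≤ ‖y_n − y*‖ on the complementary event. Define the stopping time N_D = inf{ n : ‖y_n − y*‖ ≤ D }. Then E[N_D] ≤ E[‖y_0 − y*‖] / u. -/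
/-!
Let `A k` (`survivalSet`) be the event that `‖y_j − y*‖ > D` for all `j ≤ k`, i.e. that the
target ball has not been hit by time `k`. Since `A k` is `F_k`-measurable, the drift condition
integrated over `A k` gives `∫_{A (k+1)} ‖y_{k+1} − y*‖ + u P(A k) ≤ ∫_{A k} ‖y_k − y*‖`.
Telescoping yields `u ∑_k P(A k) ≤ E ‖y_0 − y*‖`, and `E[N_D] ≤ ∑_k P(A k)` by the tail-sum
formula.
-/

open MeasureTheory Finset
open scoped ENNReal

namespace MeasureTheory

variable {Ω : Type*} {m0 : MeasurableSpace Ω} {P : Measure Ω} {F : Filtration ℕ m0}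
  {X : ℕ → Ω → ℝ} {D u : ℝ}

def survivalSet (X : ℕ → Ω → ℝ) (D : ℝ) (k : ℕ) : Set Ω :=
  {ω | ∀ j ≤ k, D < X j ω}

lemma survivalSet_succ_subset (k : ℕ) : survivalSet X D (k + 1) ⊆ survivalSet X D k :=
  fun _ hω j hj => hω j (hj.trans k.le_succ)

lemma measurableSet_survivalSet (hX : StronglyAdapted F X) (k : ℕ) :
    MeasurableSet[F k] (survivalSet X D k) := by
  simp only [survivalSet, Set.ofPred_forall]
  exact .iInter fun j => .iInter fun hj =>
    F.mono hj _ (measurableSet_lt measurable_const (hX j).measurable)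

lemma setIntegral_survivalSet_succ_add_le [IsFiniteMeasure P] (hX : StronglyAdapted F X)
    (hint : ∀ n, Integrable (X n) P) (hnonneg : ∀ n ω, 0 ≤ X n ω)
    (hdrift : ∀ n, ∀ᵐ ω ∂P, D < X n ω → P[X (n + 1)|F n] ω ≤ X n ω - u) (k : ℕ) :
    ∫ ω in survivalSet X D (k + 1), X (k + 1) ω ∂P + u * P.real (survivalSet X D k)
      ≤ ∫ ω in survivalSet X D k, X k ω ∂P := by
  set A := survivalSet X D
  have hAF : MeasurableSet[F k] (A k) := measurableSet_survivalSet hX k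
  have hA : MeasurableSet (A k) := F.le k _ hAF
  have hdrop : ∫ ω in A (k + 1), X (k + 1) ω ∂P ≤ ∫ ω in A k, X (k + 1) ω ∂P :=
    setIntegral_mono_set (hint _).integrableOn (.of_forall (hnonneg _))
      (survivalSet_succ_subset k).eventuallyLE
  have hcond : ∫ ω in A k, P[X (k + 1)|F k] ω ∂P ≤ ∫ ω in A k, (X k ω - u) ∂P := by
    refine setIntegral_mono_on_ae integrable_condExp.integrableOn
      ((hint k).sub (integrable_const u)).integrableOn hA ?_
    filter_upwards [hdrift k] with ω hω hωA using hω (hωA k le_rfl)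
  have hsub : ∫ ω in A k, (X k ω - u) ∂P = ∫ ω in A k, X k ω ∂P - u * P.real (A k) := by
    rw [integral_sub (hint k).integrableOn (integrableOn_const), setIntegral_const, smul_eq_mul,
      mul_comm]
  rw [← setIntegral_condExp (F.le k) (hint _) hAF] at hdrop
  linarith

lemma mul_sum_measureReal_survivalSet_add_le [IsFiniteMeasure P] (hX : StronglyAdapted F X)
    (hint : ∀ n, Integrable (X n) P) (hnonneg : ∀ n ω, 0 ≤ X n ω)
    (hdrift : ∀ n, ∀ᵐ ω ∂P, D < X n ω → P[X (n + 1)|F n] ω ≤ X n ω - u) (n : ℕ) :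
    u * ∑ k ∈ range n, P.real (survivalSet X D k) + ∫ ω in survivalSet X D n, X n ω ∂P
      ≤ ∫ ω in survivalSet X D 0, X 0 ω ∂P := by
  induction n with
  | zero => simp
  | succ n ih =>
    have := setIntegral_survivalSet_succ_add_le hX hint hnonneg hdrift n
    rw [sum_range_succ]
    linarith

lemma tsum_measure_survivalSet_le [IsFiniteMeasure P] (hX : StronglyAdapted F X)
    (hint : ∀ n, Integrable (X n) P) (hnonneg : ∀ n ω, 0 ≤ X n ω) (hu : 0 < u)
    (hdrift : ∀ n, ∀ᵐ ω ∂P, D < X n ω → P[X (n + 1)|F n] ω ≤ X n ω - u) :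
    ∑' k, P (survivalSet X D k) ≤ ENNReal.ofReal ((∫ ω, X 0 ω ∂P) / u) := by
  refine ENNReal.tsum_le_of_sum_range_le fun n => ?_
  have htelescope := mul_sum_measureReal_survivalSet_add_le hX hint hnonneg hdrift n
  have hlast : 0 ≤ ∫ ω in survivalSet X D n, X n ω ∂P := setIntegral_nonneg_of_ae
    (.of_forall (hnonneg n))
  have hfirst : ∫ ω in survivalSet X D 0, X 0 ω ∂P ≤ ∫ ω, X 0 ω ∂P :=
    setIntegral_le_integral (hint 0) (.of_forall (hnonneg 0))
  have hsum_ne_top : ∑ k ∈ range n, P (survivalSet X D k) ≠ ∞ :=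
    ENNReal.sum_ne_top.mpr fun _ _ => measure_ne_top _ _
  rw [ENNReal.le_ofReal_iff_toReal_le hsum_ne_top (div_nonneg (integral_nonneg (hnonneg 0)) hu.le),
    ENNReal.toReal_sum fun _ _ => measure_ne_top _ _, le_div_iff₀ hu]
  simp only [← measureReal_def]
  linarith

lemma biInf_hittingTime_le_tsum_indicator (ω : Ω) :
    ⨅ n ∈ {n : ℕ | X n ω ≤ D}, (n : ℝ≥0∞) ≤ ∑' k, (survivalSet X D k).indicator 1 ω := by
  classical
  by_cases hhit : ∃ n, X n ω ≤ D
  · have hsurv : ∀ k < Nat.find hhit, ω ∈ survivalSet X D k := fun k hk j hj =>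
      not_le.mp (Nat.find_min hhit (hj.trans_lt hk))
    calc ⨅ n ∈ {n : ℕ | X n ω ≤ D}, (n : ℝ≥0∞)
        ≤ Nat.find hhit := biInf_le _ (Nat.find_spec hhit)
      _ = ∑ k ∈ range (Nat.find hhit), (survivalSet X D k).indicator 1 ω := by
        rw [sum_congr rfl fun k hk => Set.indicator_of_mem (hsurv k (mem_range.mp hk)) 1]
        simp
      _ ≤ ∑' k, (survivalSet X D k).indicator 1 ω := ENNReal.sum_le_tsum _
  · push Not at hhit
    have hsurv : ∀ k, ω ∈ survivalSet X D k := fun k j _ => hhit j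
    simp [Set.indicator_of_mem (hsurv _)]

lemma lintegral_hittingTime_le_tsum_measure (hX : StronglyAdapted F X) :
    ∫⁻ ω, ⨅ n ∈ {n : ℕ | X n ω ≤ D}, (n : ℝ≥0∞) ∂P ≤ ∑' k, P (survivalSet X D k) := by
  have hA k : MeasurableSet (survivalSet X D k) := F.le k _ (measurableSet_survivalSet hX k)
  calc ∫⁻ ω, ⨅ n ∈ {n : ℕ | X n ω ≤ D}, (n : ℝ≥0∞) ∂P
      ≤ ∫⁻ ω, ∑' k, (survivalSet X D k).indicator 1 ω ∂P :=
        lintegral_mono biInf_hittingTime_le_tsum_indicator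
    _ = ∑' k, P (survivalSet X D k) := by
        rw [lintegral_tsum fun k => (measurable_one.indicator (hA k)).aemeasurable]
        simp only [lintegral_indicator_one (hA _)]

end MeasureTheory

theorem drift_expected_hitting_time_general
    {Ω : Type*} {m0 : MeasurableSpace Ω} {P : Measure Ω} [IsProbabilityMeasure P]
    (F : Filtration ℕ m0)
    {E : Type*} [NormedAddCommGroup E]
    (y : ℕ → Ω → E) (ystar : E)
    (hadapted : StronglyAdapted F y)
    (hint : ∀ n, Integrable (fun ω => ‖y n ω - ystar‖) P)
    (u D : ℝ) (hu : 0 < u)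
    (hdrift : ∀ n, ∀ᵐ ω ∂P,
      (D ≤ ‖y n ω - ystar‖ →
        (P[(fun ω' => ‖y (n + 1) ω' - ystar‖) | F n]) ω ≤ ‖y n ω - ystar‖ - u) ∧
      (‖y n ω - ystar‖ < D →
        (P[(fun ω' => ‖y (n + 1) ω' - ystar‖) | F n]) ω ≤ ‖y n ω - ystar‖)) :
    ∫⁻ ω, (⨅ n ∈ {n : ℕ | ‖y n ω - ystar‖ ≤ D}, (n : ℝ≥0∞)) ∂P
      ≤ ENNReal.ofReal ((∫ ω, ‖y 0 ω - ystar‖ ∂P) / u) := by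
  have hX : StronglyAdapted F fun n ω => ‖y n ω - ystar‖ := fun n =>
    ((hadapted n).sub stronglyMeasurable_const).norm
  have hdrift' : ∀ n, ∀ᵐ ω ∂P, D < ‖y n ω - ystar‖ →
      P[(fun ω' => ‖y (n + 1) ω' - ystar‖)|F n] ω ≤ ‖y n ω - ystar‖ - u := fun n => by
    filter_upwards [hdrift n] with ω hω using fun hD => hω.1 hD.le
  exact (lintegral_hittingTime_le_tsum_measure hX).trans
    (tsum_measure_survivalSet_le hX hint (fun _ _ => norm_nonneg _) hu hdrift')

/-- Drift-based expected hitting-time bound: if an adapted sequence `y` in a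
finite-dimensional normed space satisfies the conditional drift condition
`E[‖y_{n+1} − y*‖ | F_n] ≤ ‖y_n − y*‖ − u` on `{‖y_n − y*‖ ≥ D}` (and
`E[‖y_{n+1} − y*‖ | F_n] ≤ ‖y_n − y*‖` otherwise), then the stopping time
`N_D = inf{n : ‖y_n − y*‖ ≤ D}` satisfies `E[N_D] ≤ E[‖y_0 − y*‖] / u`. -/
theorem drift_expected_hitting_time
    {Ω : Type*} {m0 : MeasurableSpace Ω} {P : Measure Ω} [IsProbabilityMeasure P]
    (F : Filtration ℕ m0)
    {E : Type*} [NormedAddCommGroup E] [NormedSpace ℝ E] [FiniteDimensional ℝ E]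
    (y : ℕ → Ω → E) (ystar : E)
    (hadapted : StronglyAdapted F y)
    (hint : ∀ n, Integrable (fun ω => ‖y n ω - ystar‖) P)
    (u D : ℝ) (hu : 0 < u) (hD : 0 ≤ D)
    (hdrift : ∀ n, ∀ᵐ ω ∂P,
      (D ≤ ‖y n ω - ystar‖ →
        (P[(fun ω' => ‖y (n + 1) ω' - ystar‖) | F n]) ω ≤ ‖y n ω - ystar‖ - u) ∧
      (‖y n ω - ystar‖ < D →
        (P[(fun ω' => ‖y (n + 1) ω' - ystar‖) | F n]) ω ≤ ‖y n ω - ystar‖)) :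
    ∫⁻ ω, (⨅ n ∈ {n : ℕ | ‖y n ω - ystar‖ ≤ D}, (n : ℝ≥0∞)) ∂P
      ≤ ENNReal.ofReal ((∫ ω, ‖y 0 ω - ystar‖ ∂P) / u) :=
  drift_expected_hitting_time_general F y ystar hadapted hint u D hu hdrift
end

section
/- Let (Ω, F, P) be a probability space with a filtration (F_t)_{t≥0}, and let (d(t))_{t≥0} be a real-valued adapted integrable process. Let N ≥ 1 be an integer, γ ∈ ℝ, η > 0, and D ≥ 0. Suppose that for every t, almost surely E[|d(t+N) − γ| | F_t] ≤ |d(t) − γ| − η on the event {|d(t) − γ| ≥ D}, and E[|d(t+N) − γ| | F_t] ≤ |d(t) − γ| on the complementary event. Define T_D = inf{ t : t is a multiple of N and |d(t) − γ| ≤ D }. Then E[T_D] ≤ N · E[|d(0) − γ|] / η. -/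
/-!
Let `X k = |d (k N) - γ|` and let `S k` be the event that `X j > D` for all `j ≤ k`, i.e. that
the sampled process has not yet entered the `D`-neighbourhood by time `k N`. Since `S k` is
`F (k N)`-measurable, the drift condition gives
`∫_{S (k+1)} X (k+1) + η P(S k) ≤ ∫_{S k} X k`, and telescoping yields
`η ∑ₖ P(S k) ≤ E[X 0]`. On the other hand `T_D ≤ N k` off `S k`, so
`E[T_D] ≤ N ∑ₖ P(S k)`.
-/

open MeasureTheory Filter
open scoped ENNReal

section TailSum

variable {α : Type*}

theorem le_mul_tsum_indicator_one {S : ℕ → Set α} {a c : ℝ≥0∞} {x : α} (hc : c ≠ 0)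
    (h : ∀ k, x ∉ S k → a ≤ c * k) :
    a ≤ c * ∑' k, (S k).indicator 1 x := by
  classical
  by_cases hx : ∃ k, x ∉ S k
  · have hmem : ∀ k < Nat.find hx, x ∈ S k := fun k hk => not_not.mp (Nat.find_min hx hk)
    calc a ≤ c * (Nat.find hx : ℝ≥0∞) := h _ (Nat.find_spec hx)
      _ = c * ∑ k ∈ Finset.range (Nat.find hx), (S k).indicator 1 x := by
        rw [Finset.sum_congr rfl fun k hk =>
          Set.indicator_of_mem (hmem k (Finset.mem_range.mp hk)) (1 : α → ℝ≥0∞)]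
        simp
      _ ≤ c * ∑' k, (S k).indicator 1 x := by gcongr; exact ENNReal.sum_le_tsum _
  · simp only [not_exists, not_not] at hx
    simp [Set.indicator_of_mem (hx _), hc]

theorem lintegral_le_mul_tsum_measure [MeasurableSpace α] {μ : Measure α} {S : ℕ → Set α}
    (hS : ∀ k, MeasurableSet (S k)) {f : α → ℝ≥0∞} {c : ℝ≥0∞} (hc : c ≠ 0)
    (hf : ∀ x k, x ∉ S k → f x ≤ c * k) :
    ∫⁻ x, f x ∂μ ≤ c * ∑' k, μ (S k) :=
  calc ∫⁻ x, f x ∂μ ≤ ∫⁻ x, c * ∑' k, (S k).indicator 1 x ∂μ :=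
        lintegral_mono fun x => le_mul_tsum_indicator_one hc (hf x)
    _ = c * ∑' k, μ (S k) := by
        rw [lintegral_const_mul c (Measurable.tsum fun k => measurable_one.indicator (hS k)),
          lintegral_tsum fun k => (measurable_one.indicator (hS k)).aemeasurable]
        simp_rw [lintegral_indicator_one (hS _)]

end TailSum

section Drift

variable {Ω : Type*} {m0 : MeasurableSpace Ω} {μ : Measure Ω} [IsFiniteMeasure μ]
  {G : ℕ → MeasurableSpace Ω} {X : ℕ → Ω → ℝ} {S : ℕ → Set Ω} {η : ℝ}

theorem setIntegral_succ_add_mul_measureReal_le (hG : ∀ k, G k ≤ m0)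
    (hX : ∀ k, Integrable (X k) μ) (hX_nonneg : ∀ k ω, 0 ≤ X k ω)
    (hS : Antitone S) (hS_meas : ∀ k, MeasurableSet[G k] (S k))
    (hdrift : ∀ k, ∀ᵐ ω ∂μ, ω ∈ S k → μ[X (k + 1) | G k] ω ≤ X k ω - η) (k : ℕ) :
    ∫ ω in S (k + 1), X (k + 1) ω ∂μ + η * μ.real (S k) ≤ ∫ ω in S k, X k ω ∂μ := by
  have hS_meas' : MeasurableSet (S k) := hG k _ (hS_meas k)
  calc ∫ ω in S (k + 1), X (k + 1) ω ∂μ + η * μ.real (S k)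
      ≤ ∫ ω in S k, X (k + 1) ω ∂μ + η * μ.real (S k) := by
        grw [setIntegral_mono_set (hX (k + 1)).integrableOn
          (Eventually.of_forall (hX_nonneg _)) (hS k.le_succ).eventuallyLE]
    _ = ∫ ω in S k, μ[X (k + 1) | G k] ω ∂μ + η * μ.real (S k) := by
        rw [setIntegral_condExp (hG k) (hX _) (hS_meas k)]
    _ ≤ ∫ ω in S k, (X k ω - η) ∂μ + η * μ.real (S k) := by
        gcongr ?_ + _
        refine setIntegral_mono_ae_restrict integrable_condExp.integrableOn
          ((hX k).sub (integrable_const η)).integrableOn ?_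
        filter_upwards [ae_restrict_of_ae (hdrift k), ae_restrict_mem hS_meas'] with ω hω hmem
        exact hω hmem
    _ = ∫ ω in S k, X k ω ∂μ := by
        rw [integral_sub (hX k).integrableOn (integrableOn_const (measure_ne_top μ _)),
          setIntegral_const, smul_eq_mul]
        ring

theorem tsum_measure_le_of_drift (hη : 0 < η) (hG : ∀ k, G k ≤ m0)
    (hX : ∀ k, Integrable (X k) μ) (hX_nonneg : ∀ k ω, 0 ≤ X k ω)
    (hS : Antitone S) (hS_meas : ∀ k, MeasurableSet[G k] (S k))
    (hdrift : ∀ k, ∀ᵐ ω ∂μ, ω ∈ S k → μ[X (k + 1) | G k] ω ≤ X k ω - η) :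
    ∑' k, μ (S k) ≤ ENNReal.ofReal ((∫ ω, X 0 ω ∂μ) / η) := by
  have htelescope : ∀ m, ∫ ω in S m, X m ω ∂μ + η * ∑ k ∈ Finset.range m, μ.real (S k)
      ≤ ∫ ω, X 0 ω ∂μ := by
    intro m
    induction m with
    | zero => simpa using setIntegral_le_integral (hX 0) (Eventually.of_forall (hX_nonneg 0))
    | succ m ih =>
        have := setIntegral_succ_add_mul_measureReal_le hG hX hX_nonneg hS hS_meas hdrift m
        rw [Finset.sum_range_succ]
        linarith
  refine ENNReal.tsum_le_of_sum_range_le fun m => ?_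
  have hpos : 0 ≤ ∫ ω in S m, X m ω ∂μ := setIntegral_nonneg_ae
    (hG m _ (hS_meas m)) (Eventually.of_forall fun ω _ => hX_nonneg m ω)
  rw [ENNReal.le_ofReal_iff_toReal_le (by simp [measure_ne_top])
      (div_nonneg (integral_nonneg (hX_nonneg 0)) hη.le),
    ENNReal.toReal_sum fun k _ => measure_ne_top μ _, le_div_iff₀ hη]
  simp_rw [← measureReal_def]
  linarith [htelescope m]

end Drift

theorem N_step_drift_hitting_time_general
    {Ω : Type*} {m0 : MeasurableSpace Ω} {P : Measure Ω} [IsProbabilityMeasure P]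
    (F : Filtration ℕ m0)
    (d : ℕ → Ω → ℝ)
    (hadapted : Adapted F d)
    (hint : ∀ t, Integrable (d t) P)
    (N : ℕ) (hN : 1 ≤ N)
    (γ η D : ℝ) (hη : 0 < η)
    (hdrift : ∀ t, ∀ᵐ ω ∂P,
      (D ≤ |d t ω - γ| →
        (P[(fun ω' => |d (t + N) ω' - γ|) | F t]) ω ≤ |d t ω - γ| - η) ∧
      (|d t ω - γ| < D →
        (P[(fun ω' => |d (t + N) ω' - γ|) | F t]) ω ≤ |d t ω - γ|)) :
    ∫⁻ ω, (⨅ t ∈ {t : ℕ | N ∣ t ∧ |d t ω - γ| ≤ D}, (t : ℝ≥0∞)) ∂P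
      ≤ ENNReal.ofReal ((N : ℝ) * (∫ ω, |d 0 ω - γ| ∂P) / η) := by
  set X : ℕ → Ω → ℝ := fun k ω => |d (k * N) ω - γ|
  set S : ℕ → Set Ω := fun k => {ω | ∀ j ≤ k, D < X j ω}
  have hS_meas : ∀ k, MeasurableSet[F (k * N)] (S k) := by
    intro k
    simp only [S, Set.ofPred_forall]
    refine MeasurableSet.iInter fun j => MeasurableSet.iInter fun hj => ?_
    refine F.mono (Nat.mul_le_mul_right N hj) _ ?_
    let := F (j * N)
    exact measurableSet_lt measurable_const ((hadapted (j * N)).sub_const γ).abs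
  have hhit : ∀ ω k, ω ∉ S k →
      ⨅ t ∈ {t : ℕ | N ∣ t ∧ |d t ω - γ| ≤ D}, (t : ℝ≥0∞) ≤ N * k := by
    intro ω k hω
    obtain ⟨j, hjk, hj⟩ : ∃ j ≤ k, X j ω ≤ D := by simpa [S] using hω
    calc ⨅ t ∈ {t : ℕ | N ∣ t ∧ |d t ω - γ| ≤ D}, (t : ℝ≥0∞) ≤ ((j * N : ℕ) : ℝ≥0∞) :=
          biInf_le _ ⟨dvd_mul_left N j, hj⟩
      _ ≤ N * k := by rw [mul_comm]; push_cast; gcongr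
  calc _ ≤ N * ∑' k, P (S k) :=
        lintegral_le_mul_tsum_measure (fun k => F.le _ _ (hS_meas k))
          (by exact_mod_cast (Nat.one_le_iff_ne_zero.mp hN)) hhit
    _ ≤ N * ENNReal.ofReal ((∫ ω, X 0 ω ∂P) / η) := by
        gcongr
        refine tsum_measure_le_of_drift hη (fun k => F.le (k * N))
          (fun k => ((hint _).sub (integrable_const γ)).abs) (fun _ _ => abs_nonneg _)
          (fun k l hkl ω hω j hj => hω j (hj.trans hkl)) hS_meas fun k => ?_
        filter_upwards [hdrift (k * N)] with ω hω hmem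
        simpa only [X, add_one_mul] using hω.1 (hmem k le_rfl).le
    _ = ENNReal.ofReal ((N : ℝ) * (∫ ω, |d 0 ω - γ| ∂P) / η) := by
        rw [← ENNReal.ofReal_natCast N, ← ENNReal.ofReal_mul (Nat.cast_nonneg N), mul_div_assoc]
        simp [X]

/-- N-step drift hitting-time bound: if a real-valued adapted integrable process
`d` contracts toward `γ` by at least `η` every `N` steps whenever it is at
distance at least `D` from `γ` (and does not expand otherwise), then the time
`T_D = inf{t : N ∣ t ∧ |d(t) − γ| ≤ D}` satisfies
`E[T_D] ≤ N · E[|d(0) − γ|] / η`. -/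
theorem N_step_drift_hitting_time
    {Ω : Type*} {m0 : MeasurableSpace Ω} {P : Measure Ω} [IsProbabilityMeasure P]
    (F : Filtration ℕ m0)
    (d : ℕ → Ω → ℝ)
    (hadapted : Adapted F d)
    (hint : ∀ t, Integrable (d t) P)
    (N : ℕ) (hN : 1 ≤ N)
    (γ η D : ℝ) (hη : 0 < η) (hD : 0 ≤ D)
    (hdrift : ∀ t, ∀ᵐ ω ∂P,
      (D ≤ |d t ω - γ| →
        (P[(fun ω' => |d (t + N) ω' - γ|) | F t]) ω ≤ |d t ω - γ| - η) ∧
      (|d t ω - γ| < D →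
        (P[(fun ω' => |d (t + N) ω' - γ|) | F t]) ω ≤ |d t ω - γ|)) :
    ∫⁻ ω, (⨅ t ∈ {t : ℕ | N ∣ t ∧ |d t ω - γ| ≤ D}, (t : ℝ≥0∞)) ∂P
      ≤ ENNReal.ofReal ((N : ℝ) * (∫ ω, |d 0 ω - γ| ∂P) / η) :=
  N_step_drift_hitting_time_general F d hadapted hint N hN γ η D hη hdrift
end
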